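/- Let G be a finite simple graph that is connected, and let H ∈ IIM_1(G) be connected. Then diam(H) ≤ diam(G) + 2. -/

import Mathlib

/-- Vertex type after `l` IIM steps starting from vertex type `V`:
at each step every existing vertex gets one new copy. -/
def IterV (V : Type) : ℕ → Type
  | 0 => V
  | l + 1 => IterV V l ⊕ IterV V l

instance iterVFintype {V : Type} [Fintype V] : ∀ l, Fintype (IterV V l)
  | 0 => inferInstanceAs (Fintype V)
  | l + 1 =>
    letI := iterVFintype (V := V) l
    inferInstanceAs (Fintype (IterV V l ⊕ IterV V l))

instance iterVNonempty {V : Type} [Nonempty V] : ∀ l, Nonempty (IterV V l)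
  | 0 => inferInstanceAs (Nonempty V)
  | l + 1 =>
    letI := iterVNonempty (V := V) l
    inferInstanceAs (Nonempty (IterV V l ⊕ IterV V l))

/-- One IIM step: each vertex `v` of `G` gets a new copy (`Sum.inr v`), which is a
clone of `v` (joined to the closed neighborhood of `v`) if `σ v = true`, and an
anticlone of `v` (joined to the complement of the closed neighborhood) if `σ v = false`.
Old vertices (`Sum.inl`) keep the edges of `G`; new vertices form an independent set. -/
def iimStep {V : Type} (G : SimpleGraph V) (σ : V → Bool) : SimpleGraph (V ⊕ V) where
  Adj x y :=
    match x, y with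
    | Sum.inl u, Sum.inl v => G.Adj u v
    | Sum.inl u, Sum.inr v =>
        if σ v = true then u = v ∨ G.Adj u v else ¬(u = v ∨ G.Adj u v)
    | Sum.inr u, Sum.inl v =>
        if σ u = true then v = u ∨ G.Adj v u else ¬(v = u ∨ G.Adj v u)
    | Sum.inr _, Sum.inr _ => False
  symm := by
    constructor
    rintro (u | u) (v | v) h
    · exact G.adj_symm h
    · exact h
    · exact h
    · exact h
  loopless := by
    constructor
    rintro (u | u) h
    · exact G.irrefl h
    · exact h

/-- The IIM graph after `l` steps starting from `G`, where `σ i` records, for each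
vertex existing after `i` steps, whether its copy created at step `i+1` is a clone
(`true`) or an anticlone (`false`).  `IIM_l(G)` is exactly the set of graphs of the
form `iimGraph G σ l` as `σ` varies. -/
def iimGraph {V : Type} (G : SimpleGraph V) (σ : ∀ i, IterV V i → Bool) :
    ∀ l, SimpleGraph (IterV V l)
  | 0 => G
  | l + 1 => iimStep (iimGraph G σ l) (σ l)

/-- The level (creation step) of a vertex of an IIM graph. -/
def levelOf {V : Type} : ∀ l, IterV V l → ℕ
  | 0, _ => 0
  | l + 1, Sum.inl x => levelOf l x
  | l + 1, Sum.inr _ => l + 1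

/-- The (level-0) vertex `x` of the initial graph, viewed as a vertex of the IIM graph
after `l` steps. -/
def liftV {V : Type} (x : V) : ∀ l, IterV V l
  | 0 => x
  | l + 1 => Sum.inl (liftV x l)

/-!
In a connected IIM step every new vertex is adjacent to some old vertex, because the new
vertices form an independent set. Old vertices are at most `diam G` apart in the new graph,
as `G` embeds in it, so any two vertices are joined through old vertices by a path of length
at most `1 + diam G + 1`.
-/

namespace SimpleGraph

variable {V W : Type*} {G : SimpleGraph V} {H : SimpleGraph W}

lemma Hom.edist_map_le (f : G →g H) (u v : V) : H.edist (f u) (f v) ≤ G.edist u v := by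
  by_cases h : G.Reachable u v
  · obtain ⟨p, hp⟩ := h.exists_walk_length_eq_edist
    rw [← hp, ← p.length_map f]
    exact edist_le _
  · rw [edist_eq_top_of_not_reachable h]
    exact le_top

lemma ediam_le_ediam_add_two_of_hom (f : G →g H) (hf : ∀ y, ∃ x, H.edist y (f x) ≤ 1) :
    H.ediam ≤ G.ediam + 2 := by
  refine ediam_le_of_edist_le fun y z => ?_
  obtain ⟨x, hx⟩ := hf y
  obtain ⟨x', hx'⟩ := hf z
  calc H.edist y z ≤ H.edist y (f x) + (H.edist (f x) (f x') + H.edist (f x') z) :=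
        SimpleGraph.edist_triangle.trans (by gcongr; exact SimpleGraph.edist_triangle)
    _ ≤ 1 + (G.ediam + 1) := by
        rw [edist_comm (u := f x')]
        gcongr
        exact (f.edist_map_le x x').trans edist_le_ediam
    _ = G.ediam + 2 := by ring

lemma diam_le_diam_add_two_of_ediam_le (hG : G.ediam ≠ ⊤) (h : H.ediam ≤ G.ediam + 2) :
    H.diam ≤ G.diam + 2 := by
  have := ENat.toNat_le_toNat h (WithTop.add_ne_top.mpr ⟨hG, ENat.ofNat_ne_top 2⟩)
  rwa [ENat.toNat_add hG (ENat.ofNat_ne_top 2)] at this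

end SimpleGraph

open SimpleGraph

section iimStep

variable {V : Type} (G : SimpleGraph V) (s : V → Bool)

def iimStepInl : G →g iimStep G s := ⟨Sum.inl, id⟩

variable {G s}

lemma iimStep_exists_adj_inl (hH : (iimStep G s).Connected) (v : V) :
    ∃ w, (iimStep G s).Adj (Sum.inr v) (Sum.inl w) := by
  have : Nontrivial (V ⊕ V) := ⟨⟨Sum.inl v, Sum.inr v, Sum.inl_ne_inr⟩⟩
  obtain ⟨w | w, hw⟩ := hH.preconnected.exists_adj_of_nontrivial (Sum.inr v)
  · exact ⟨w, hw⟩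
  · exact (hw : False).elim

lemma iimStep_diam_le [Finite V] (hG : G.Connected) (hH : (iimStep G s).Connected) :
    (iimStep G s).diam ≤ G.diam + 2 := by
  have : Nonempty V := hG.nonempty
  refine diam_le_diam_add_two_of_ediam_le (connected_iff_ediam_ne_top.mp hG)
    (ediam_le_ediam_add_two_of_hom (iimStepInl G s) ?_)
  rintro (v | v)
  · exact ⟨v, SimpleGraph.edist_self.trans_le zero_le_one⟩
  · obtain ⟨w, hw⟩ := iimStep_exists_adj_inl hH v
    exact ⟨w, (edist_eq_one_iff_adj.mpr hw).le⟩

end iimStep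

/-- If `G` is a connected finite graph and `H ∈ IIM_1(G)` is connected,
then `diam(H) ≤ diam(G) + 2`. -/
theorem stmt5 {V : Type} [Fintype V] (G : SimpleGraph V) (hG : G.Connected)
    (σ : ∀ i, IterV V i → Bool) (hH : (iimGraph G σ 1).Connected) :
    (iimGraph G σ 1).diam ≤ G.diam + 2 :=
  iimStep_diam_le hG hH
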